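/- arXiv:1301.1481 — 6 statements merged into one kernel-verified Lean document; each statement's English description precedes it below -/
import Mathlib

section
/- Let (b_n)_{n≥1} be a probability distribution on the positive integers with b_1 ≥ b > 0, and set c_l = Σ_{j>l} b_j and c(1) = Σ_{l≥0} c_l = Σ_{n≥1} n b_n < ∞. Let α = (c(1) − 1)/(1 − b). Then for every integer l ≥ 1, c_l · |1 − e^{iπ/(l+1)}|^{-1} ≤ (1 − b) · |1 − e^{iπ/(1+α)}|^{-1}. -/
/-! With `A = 1 - b`, the tails satisfy `c_l ≤ 1 - b_1 ≤ A` and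
`(l + 1) c_l ≤ c(1) - b_1 ≤ A (1 + α)`. Since `|1 - e^{iπ/s}| = 2 sin (π / (2s))`, the claim
becomes `c_l sin (π / (2(1 + α))) ≤ A sin (π / (2(l + 1)))`. If `l + 1 ≤ 1 + α` this follows from
`c_l ≤ A` and monotonicity of `sin` on `[0, π/2]`; otherwise from `(l + 1) c_l ≤ A (1 + α)` and
concavity, `sin (λx) ≥ λ sin x` for `λ = (1 + α) / (l + 1) ≤ 1`. -/

open Complex Real Finset

theorem norm_one_sub_exp_ofReal_mul_I {θ : ℝ} (h0 : 0 ≤ θ) (h2π : θ ≤ 2 * π) :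
    ‖1 - exp (θ * I)‖ = 2 * Real.sin (θ / 2) := by
  rw [← norm_neg, neg_sub, mul_comm, norm_exp_I_mul_ofReal_sub_one, Real.norm_eq_abs,
    abs_of_nonneg]
  exact mul_nonneg zero_le_two (sin_nonneg_of_nonneg_of_le_pi (by linarith) (by linarith))

theorem mul_sin_le_sin_mul {t x : ℝ} (ht0 : 0 ≤ t) (ht1 : t ≤ 1) (hx0 : 0 ≤ x) (hxπ : x ≤ π) :
    t * Real.sin x ≤ Real.sin (t * x) := by
  simpa using strictConcaveOn_sin_Icc.concaveOn.2 ⟨hx0, hxπ⟩ ⟨le_rfl, pi_pos.le⟩ ht0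
    (sub_nonneg.2 ht1) (add_sub_cancel t 1)

theorem pi_div_div_two_mem_Ioc {s : ℝ} (hs : 1 ≤ s) : π / s / 2 ∈ Set.Ioc 0 (π / 2) :=
  ⟨by positivity, div_le_div_of_nonneg_right (div_le_self pi_pos.le hs) zero_le_two⟩

theorem mul_sin_pi_div_div_two_le {s t c A : ℝ} (hs : 1 ≤ s) (ht : 1 ≤ t) (hc : 0 ≤ c)
    (hcA : c ≤ A) (htc : t * c ≤ A * s) :
    c * Real.sin (π / s / 2) ≤ A * Real.sin (π / t / 2) := by
  have hA : 0 ≤ A := hc.trans hcA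
  obtain ⟨hs0, hs1⟩ := pi_div_div_two_mem_Ioc hs
  obtain ⟨ht0, ht1⟩ := pi_div_div_two_mem_Ioc ht
  have hsin : 0 ≤ Real.sin (π / s / 2) :=
    sin_nonneg_of_nonneg_of_le_pi hs0.le (by linarith [pi_pos])
  rcases le_total t s with hts | hst
  · have hmono : Real.sin (π / s / 2) ≤ Real.sin (π / t / 2) :=
      sin_le_sin_of_le_of_le_pi_div_two (by linarith [pi_pos]) ht1 (by gcongr)
    calc c * Real.sin (π / s / 2) ≤ A * Real.sin (π / s / 2) := by gcongr
      _ ≤ A * Real.sin (π / t / 2) := by gcongr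
  · have hconc : s / t * Real.sin (π / s / 2) ≤ Real.sin (π / t / 2) := by
      have h := mul_sin_le_sin_mul (t := s / t) (x := π / s / 2) (by positivity)
        ((div_le_one (by linarith)).2 hst) hs0.le (by linarith [pi_pos])
      rwa [show s / t * (π / s / 2) = π / t / 2 by field_simp] at h
    calc c * Real.sin (π / s / 2) ≤ A * s / t * Real.sin (π / s / 2) := by
          gcongr; rw [le_div_iff₀ (by linarith)]; linarith
      _ = A * (s / t * Real.sin (π / s / 2)) := by ring
      _ ≤ A * Real.sin (π / t / 2) := by gcongr

theorem mul_inv_norm_one_sub_exp_pi_div_le {s t c A : ℝ} (hs : 1 ≤ s) (ht : 1 ≤ t) (hc : 0 ≤ c)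
    (hcA : c ≤ A) (htc : t * c ≤ A * s) :
    c * ‖1 - exp (π / t * I)‖⁻¹ ≤ A * ‖1 - exp (π / s * I)‖⁻¹ := by
  have hnorm : ∀ r : ℝ, 1 ≤ r → ‖1 - exp (π / r * I)‖ = 2 * Real.sin (π / r / 2) := by
    intro r hr
    rw [← ofReal_div, norm_one_sub_exp_ofReal_mul_I (by positivity)]
    linarith [div_le_self pi_pos.le hr, pi_pos]
  have hpos : ∀ r : ℝ, 1 ≤ r → 0 < Real.sin (π / r / 2) := fun r hr =>
    have ⟨h0, h1⟩ := pi_div_div_two_mem_Ioc hr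
    sin_pos_of_pos_of_lt_pi h0 (by linarith [pi_pos])
  rw [hnorm s hs, hnorm t ht, ← div_eq_mul_inv, ← div_eq_mul_inv,
    div_le_div_iff₀ (by linarith [hpos t ht]) (by linarith [hpos s hs])]
  linarith [mul_sin_pi_div_div_two_le hs ht hc hcA htc]

section TailBounds

variable {b : ℕ → ℝ}

theorem tsum_nat_add_succ_le_one_sub (hb : ∀ n, 0 ≤ b n) (hbs : Summable b)
    (hsum : ∑' n, b n = 1) {l : ℕ} (hl : 1 ≤ l) : ∑' j, b (j + l + 1) ≤ 1 - b 1 := by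
  have h := hbs.sum_add_tsum_nat_add (l + 1)
  simp only [← add_assoc] at h
  have : b 1 ≤ ∑ n ∈ range (l + 1), b n :=
    single_le_sum (fun n _ => hb n) (mem_range.2 (by omega))
  linarith

theorem mul_tsum_nat_add_succ_le (hb : ∀ n, 0 ≤ b n) (hbs : Summable b)
    (hmean : Summable fun n : ℕ => n * b n) {l : ℕ} (hl : 1 ≤ l) :
    (l + 1) * ∑' j, b (j + l + 1) ≤ ∑' n : ℕ, n * b n - b 1 := by
  have h := hmean.sum_add_tsum_nat_add (l + 1)
  simp only [← add_assoc] at h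
  have head : b 1 ≤ ∑ n ∈ range (l + 1), (n : ℝ) * b n := by
    simpa using single_le_sum (f := fun n : ℕ => (n : ℝ) * b n)
      (fun n _ => mul_nonneg n.cast_nonneg (hb n)) (mem_range.2 (by omega : 1 < l + 1))
  have tail :
      (l + 1) * ∑' j, b (j + l + 1) ≤ ∑' j : ℕ, ((j + l + 1 : ℕ) : ℝ) * b (j + l + 1) := by
    rw [← tsum_mul_left]
    refine Summable.tsum_le_tsum (fun j => ?_)
      (((summable_nat_add_iff (l + 1)).2 hbs).mul_left _) ((summable_nat_add_iff (l + 1)).2 hmean)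
    gcongr
    · exact hb _
    · push_cast; linarith [j.cast_nonneg (α := ℝ)]
  linarith

theorem one_le_tsum_nat_mul (hb : ∀ n, 0 ≤ b n) (hb0 : b 0 = 0) (hbs : Summable b)
    (hsum : ∑' n, b n = 1) (hmean : Summable fun n : ℕ => n * b n) : 1 ≤ ∑' n : ℕ, n * b n := by
  rw [← hsum]
  refine hbs.tsum_le_tsum (fun n => ?_) hmean
  rcases n with _ | n
  · simp [hb0]
  · exact le_mul_of_one_le_left (hb _) (by simp)

end TailBounds

theorem stmt_2_general (b : ℕ → ℝ) (b0 : ℝ) (hzero : b 0 = 0)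
    (hnonneg : ∀ n, 0 ≤ b n) (hsum : ∑' n : ℕ, b n = 1) (hb1 : b0 ≤ b 1)
    (hmean : Summable (fun n : ℕ => (n : ℝ) * b n))
    (c1 : ℝ) (hc1 : c1 = ∑' n : ℕ, (n : ℝ) * b n)
    (α : ℝ) (hα : α = (c1 - 1) / (1 - b0))
    (cl : ℕ → ℝ) (hcl : ∀ l, cl l = ∑' j : ℕ, b (j + l + 1)) :
    ∀ l : ℕ, 1 ≤ l →
      cl l * ‖1 - Complex.exp ((π / (l + 1)) * Complex.I)‖⁻¹ ≤
        (1 - b0) * ‖1 - Complex.exp ((π / (1 + α)) * Complex.I)‖⁻¹ := by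
  intro l hl
  have hbs : Summable b := by
    by_contra h
    simp [tsum_eq_zero_of_not_summable h] at hsum
  have hcl_nonneg : 0 ≤ cl l := hcl l ▸ tsum_nonneg fun j => hnonneg _
  have hcl_le : cl l ≤ 1 - b 1 := hcl l ▸ tsum_nat_add_succ_le_one_sub hnonneg hbs hsum hl
  have hmul_le : (l + 1) * cl l ≤ c1 - b 1 :=
    hcl l ▸ hc1 ▸ mul_tsum_nat_add_succ_le hnonneg hbs hmean hl
  have hc1_ge : 1 ≤ c1 := hc1 ▸ one_le_tsum_nat_mul hnonneg hzero hbs hsum hmean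
  have hb0_le : b0 ≤ 1 := by linarith
  have hα_nonneg : 0 ≤ α := hα ▸ div_nonneg (by linarith) (by linarith)
  have hscale : (l + 1) * cl l ≤ (1 - b0) * (1 + α) := by
    rcases hb0_le.eq_or_lt with rfl | hlt
    · have : cl l = 0 := by linarith
      simp [this]
    · rw [hα, mul_add, mul_div_cancel₀ _ (sub_ne_zero.2 hlt.ne')]
      linarith
  have key := mul_inv_norm_one_sub_exp_pi_div_le (s := 1 + α) (t := l + 1) (by linarith)
    (by linarith) hcl_nonneg (by linarith) hscale
  push_cast at key
  exact key

theorem stmt_2 (b : ℕ → ℝ) (b0 : ℝ) (hb0pos : 0 < b0) (hzero : b 0 = 0)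
    (hnonneg : ∀ n, 0 ≤ b n) (hsum : ∑' n : ℕ, b n = 1) (hb1 : b0 ≤ b 1)
    (hmean : Summable (fun n : ℕ => (n : ℝ) * b n))
    (c1 : ℝ) (hc1 : c1 = ∑' n : ℕ, (n : ℝ) * b n)
    (α : ℝ) (hα : α = (c1 - 1) / (1 - b0))
    (cl : ℕ → ℝ) (hcl : ∀ l, cl l = ∑' j : ℕ, b (j + l + 1)) :
    ∀ l : ℕ, 1 ≤ l →
      cl l * ‖1 - Complex.exp ((π / (l + 1)) * Complex.I)‖⁻¹ ≤
        (1 - b0) * ‖1 - Complex.exp ((π / (1 + α)) * Complex.I)‖⁻¹ :=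
  stmt_2_general b b0 hzero hnonneg hsum hb1 hmean c1 hc1 α hα cl hcl
end

section
/- Suppose the drift condition holds: V : S → [1, ∞), PV(x) ≤ λV(x) for x ∉ C and PV(x) ≤ K for x ∈ C, with λ < 1. Let τ = inf{n ≥ 1 : X_n ∈ C} and G(r, x) = E_x[r^τ]. Then for all 1 ≤ r ≤ λ^{-1}: G(r, x) ≤ V(x) if x ∉ C, and G(r, x) ≤ rK if x ∈ C. In particular P_x(τ < ∞) = 1 for all x. -/
/-!
First-step analysis. The partial sums `G_N(r, x) = ∑_{n ≤ N} h n x rⁿ` satisfy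
`G_{N+1}(r, x) = r (P(x, C) + ∫_{Cᶜ} G_N(r, ·) dP(x))`, so if `G_N(r, ·) ≤ V` off `C` then
`G_{N+1}(r, ·) ≤ r PV` everywhere, which is at most `rλV ≤ V` off `C`. The tails
`1 - G_N(1, x) = P_x(τ > N)` obey the same recursion without the `P(x, C)` term, so they are
bounded by `λᴺ V` off `C` and by `λ^(N-1) PV(x)` everywhere, hence tend to `0`.
-/

open MeasureTheory ProbabilityTheory Finset Filter Topology

theorem tsum_le_of_sum_range_add_le {f : ℕ → ℝ} {c : ℝ} (hf : ∀ n, 0 ≤ f n) (k : ℕ)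
    (h : ∀ n, ∑ i ∈ range (n + k), f i ≤ c) : ∑' n, f n ≤ c :=
  Real.tsum_le_of_sum_range_le hf fun n =>
    (sum_le_sum_of_subset_of_nonneg (range_mono (n.le_add_right k)) fun i _ _ => hf i).trans (h n)

structure IsFirstHittingLaw {S : Type*} [MeasurableSpace S] (P : Kernel S S) (C : Set S)
    (h : ℕ → S → ℝ) : Prop where
  zero : ∀ x, h 0 x = 0
  one : ∀ x, h 1 x = (P x C).toReal
  add_two : ∀ n x, h (n + 2) x = ∫ y in Cᶜ, h (n + 1) y ∂(P x)

namespace IsFirstHittingLaw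

variable {S : Type*} [MeasurableSpace S] {P : Kernel S S} {C : Set S} {h : ℕ → S → ℝ}

theorem measurable (hh : IsFirstHittingLaw P C h) (hC : MeasurableSet C) :
    ∀ n, Measurable (h n)
  | 0 => by simp only [funext hh.zero, measurable_const]
  | 1 => by simpa only [funext hh.one] using (P.measurable_coe hC).ennreal_toReal
  | n + 2 => by
    simp_rw [funext (hh.add_two n), ← integral_indicator hC.compl]
    exact (((hh.measurable hC (n + 1)).indicator hC.compl).stronglyMeasurable.integral_kernel
      (κ := P)).measurable

theorem nonneg (hh : IsFirstHittingLaw P C h) : ∀ n x, 0 ≤ h n x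
  | 0, x => (hh.zero x).ge
  | 1, x => hh.one x ▸ ENNReal.toReal_nonneg
  | n + 2, x => hh.add_two n x ▸ integral_nonneg fun y => hh.nonneg (n + 1) y

theorem le_one [IsMarkovKernel P] (hh : IsFirstHittingLaw P C h) : ∀ n x, h n x ≤ 1
  | 0, x => (hh.zero x).trans_le zero_le_one
  | 1, x => hh.one x ▸ measureReal_le_one
  | n + 2, x => by
    rw [hh.add_two]
    calc ∫ y in Cᶜ, h (n + 1) y ∂(P x) ≤ ∫ _ in Cᶜ, (1 : ℝ) ∂(P x) :=
          integral_mono_of_nonneg (.of_forall fun y => hh.nonneg (n + 1) y)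
            (integrable_const 1) (.of_forall fun y => hh.le_one (n + 1) y)
      _ ≤ 1 := by simp

theorem integrable [IsMarkovKernel P] (hh : IsFirstHittingLaw P C h) (hC : MeasurableSet C)
    (n : ℕ) (x : S) : Integrable (h n) (P x) :=
  (integrable_const (1 : ℝ)).mono' (hh.measurable hC n).aestronglyMeasurable
    (.of_forall fun y => by simpa [abs_of_nonneg (hh.nonneg n y)] using hh.le_one n y)

theorem sum_range_add_two_mul_pow [IsMarkovKernel P] (hh : IsFirstHittingLaw P C h)
    (hC : MeasurableSet C) (r : ℝ) (N : ℕ) (x : S) :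
    ∑ n ∈ range (N + 2), h n x * r ^ n =
      r * ((P x C).toReal + ∫ y in Cᶜ, ∑ n ∈ range (N + 1), h n y * r ^ n ∂(P x)) := by
  have hint : ∀ n, Integrable (fun y => h (n + 1) y * r ^ (n + 1)) ((P x).restrict Cᶜ) :=
    fun n => ((hh.integrable hC (n + 1) x).mul_const _).restrict
  simp_rw [sum_range_succ' _ (N + 1), sum_range_succ' _ N, hh.zero, zero_mul, add_zero,
    integral_finsetSum _ fun n _ => hint n, hh.add_two, hh.one, mul_add,
    mul_sum]
  rw [add_comm]
  congr 1
  · ring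
  · refine sum_congr rfl fun n _ => ?_
    rw [← integral_const_mul, ← integral_mul_const]
    congr 1 with y
    ring

theorem sum_range_add_two_mul_pow_le [IsMarkovKernel P] (hh : IsFirstHittingLaw P C h)
    (hC : MeasurableSet C) {V : S → ℝ} {r : ℝ} {N : ℕ} {x : S} (hr : 0 ≤ r)
    (hV1 : ∀ y ∈ C, 1 ≤ V y) (hV : Integrable V (P x))
    (hN : ∀ y ∉ C, ∑ n ∈ range (N + 1), h n y * r ^ n ≤ V y) :
    ∑ n ∈ range (N + 2), h n x * r ^ n ≤ r * ∫ y, V y ∂(P x) := by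
  rw [hh.sum_range_add_two_mul_pow hC, ← integral_add_compl hC hV]
  refine mul_le_mul_of_nonneg_left (add_le_add ?_ ?_) hr
  · calc (P x C).toReal = ∫ _ in C, (1 : ℝ) ∂(P x) := by simp [measureReal_def]
      _ ≤ ∫ y in C, V y ∂(P x) :=
        setIntegral_mono_on (integrable_const 1).integrableOn hV.integrableOn hC hV1
  · exact setIntegral_mono_on (integrable_finsetSum _ fun n _ =>
      ((hh.integrable hC n x).mul_const _).integrableOn) hV.integrableOn hC.compl hN

theorem one_sub_sum_range_add_two [IsMarkovKernel P] (hh : IsFirstHittingLaw P C h)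
    (hC : MeasurableSet C) (N : ℕ) (x : S) :
    1 - ∑ n ∈ range (N + 2), h n x = ∫ y in Cᶜ, (1 - ∑ n ∈ range (N + 1), h n y) ∂(P x) := by
  have hsum := hh.sum_range_add_two_mul_pow hC 1 N x
  simp only [one_pow, mul_one, one_mul] at hsum
  rw [hsum, integral_sub (integrable_const 1).integrableOn
    (integrable_finsetSum _ fun n _ => (hh.integrable hC n x).integrableOn), setIntegral_const,
    smul_eq_mul, mul_one, probReal_compl_eq_one_sub hC, measureReal_def]
  ring

theorem one_sub_sum_range_nonneg [IsMarkovKernel P] (hh : IsFirstHittingLaw P C h)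
    (hC : MeasurableSet C) : ∀ N x, 0 ≤ 1 - ∑ n ∈ range (N + 1), h n x
  | 0, x => by simp [hh.zero]
  | N + 1, x => hh.one_sub_sum_range_add_two hC N x ▸
      integral_nonneg fun y => hh.one_sub_sum_range_nonneg hC N y

theorem one_sub_sum_range_add_two_le [IsMarkovKernel P] (hh : IsFirstHittingLaw P C h)
    (hC : MeasurableSet C) {V : S → ℝ} {c : ℝ} {N : ℕ} {x : S} (hc : 0 ≤ c)
    (hV0 : ∀ y, 0 ≤ V y) (hV : Integrable V (P x))
    (hN : ∀ y ∉ C, 1 - ∑ n ∈ range (N + 1), h n y ≤ c * V y) :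
    1 - ∑ n ∈ range (N + 2), h n x ≤ c * ∫ y, V y ∂(P x) := by
  rw [hh.one_sub_sum_range_add_two hC, ← integral_const_mul]
  calc _ ≤ ∫ y in Cᶜ, c * V y ∂(P x) :=
        setIntegral_mono_on ((integrable_const 1).sub (integrable_finsetSum _ fun n _ =>
          hh.integrable hC n x)).integrableOn (hV.const_mul c).integrableOn hC.compl hN
    _ ≤ ∫ y, c * V y ∂(P x) :=
        setIntegral_le_integral (hV.const_mul c) (.of_forall fun y => mul_nonneg hc (hV0 y))

section Drift

variable [IsMarkovKernel P] {V : S → ℝ} {lam : ℝ}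

theorem sum_range_mul_pow_le_of_drift (hh : IsFirstHittingLaw P C h) (hC : MeasurableSet C)
    (hV1 : ∀ x, 1 ≤ V x) (hVint : ∀ x, Integrable V (P x))
    (hdrift : ∀ x ∉ C, ∫ y, V y ∂(P x) ≤ lam * V x) {r : ℝ} (hr0 : 0 ≤ r) (hr : r * lam ≤ 1)
    (N : ℕ) : ∀ x ∉ C, ∑ n ∈ range (N + 1), h n x * r ^ n ≤ V x := by
  induction N with
  | zero => exact fun x _ => by simpa [hh.zero] using zero_le_one.trans (hV1 x)
  | succ N ih =>
    intro x hx
    calc ∑ n ∈ range (N + 2), h n x * r ^ n ≤ r * ∫ y, V y ∂(P x) :=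
          hh.sum_range_add_two_mul_pow_le hC hr0 (fun y _ => hV1 y) (hVint x) ih
      _ ≤ r * (lam * V x) := mul_le_mul_of_nonneg_left (hdrift x hx) hr0
      _ = (r * lam) * V x := by ring
      _ ≤ V x := mul_le_of_le_one_left (zero_le_one.trans (hV1 x)) hr

theorem tsum_mul_pow_le_of_notMem (hh : IsFirstHittingLaw P C h) (hC : MeasurableSet C)
    (hV1 : ∀ x, 1 ≤ V x) (hVint : ∀ x, Integrable V (P x))
    (hdrift : ∀ x ∉ C, ∫ y, V y ∂(P x) ≤ lam * V x) {r : ℝ} (hr0 : 0 ≤ r) (hr : r * lam ≤ 1)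
    {x : S} (hx : x ∉ C) : ∑' n, h n x * r ^ n ≤ V x :=
  tsum_le_of_sum_range_add_le (fun n => mul_nonneg (hh.nonneg n x) (pow_nonneg hr0 n)) 1
    fun N => hh.sum_range_mul_pow_le_of_drift hC hV1 hVint hdrift hr0 hr N x hx

theorem tsum_mul_pow_le_mul_integral (hh : IsFirstHittingLaw P C h) (hC : MeasurableSet C)
    (hV1 : ∀ x, 1 ≤ V x) (hVint : ∀ x, Integrable V (P x))
    (hdrift : ∀ x ∉ C, ∫ y, V y ∂(P x) ≤ lam * V x) {r : ℝ} (hr0 : 0 ≤ r) (hr : r * lam ≤ 1)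
    (x : S) : ∑' n, h n x * r ^ n ≤ r * ∫ y, V y ∂(P x) :=
  tsum_le_of_sum_range_add_le (fun n => mul_nonneg (hh.nonneg n x) (pow_nonneg hr0 n)) 2
    fun N => hh.sum_range_add_two_mul_pow_le hC hr0 (fun y _ => hV1 y) (hVint x)
      (hh.sum_range_mul_pow_le_of_drift hC hV1 hVint hdrift hr0 hr N)

theorem one_sub_sum_range_le_of_drift (hh : IsFirstHittingLaw P C h) (hC : MeasurableSet C)
    (hV1 : ∀ x, 1 ≤ V x) (hVint : ∀ x, Integrable V (P x))
    (hdrift : ∀ x ∉ C, ∫ y, V y ∂(P x) ≤ lam * V x) (hlam0 : 0 ≤ lam) (N : ℕ) :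
    ∀ x ∉ C, 1 - ∑ n ∈ range (N + 1), h n x ≤ lam ^ N * V x := by
  induction N with
  | zero => exact fun x _ => by simpa [hh.zero] using hV1 x
  | succ N ih =>
    intro x hx
    calc 1 - ∑ n ∈ range (N + 2), h n x ≤ lam ^ N * ∫ y, V y ∂(P x) :=
          hh.one_sub_sum_range_add_two_le hC (pow_nonneg hlam0 N)
            (fun y => zero_le_one.trans (hV1 y)) (hVint x) ih
      _ ≤ lam ^ N * (lam * V x) := mul_le_mul_of_nonneg_left (hdrift x hx) (pow_nonneg hlam0 N)
      _ = lam ^ (N + 1) * V x := by ring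

theorem hasSum_one (hh : IsFirstHittingLaw P C h) (hC : MeasurableSet C)
    (hV1 : ∀ x, 1 ≤ V x) (hVint : ∀ x, Integrable V (P x))
    (hdrift : ∀ x ∉ C, ∫ y, V y ∂(P x) ≤ lam * V x) (hlam0 : 0 ≤ lam) (hlam1 : lam < 1)
    (x : S) : HasSum (fun n => h n x) 1 := by
  rw [hasSum_iff_tendsto_nat_of_nonneg (fun n => hh.nonneg n x), ← tendsto_add_atTop_iff_nat 2]
  have hlim : Tendsto (fun N => 1 - lam ^ N * ∫ y, V y ∂(P x)) atTop (𝓝 1) := by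
    simpa using ((tendsto_pow_atTop_nhds_zero_of_lt_one hlam0 hlam1).mul_const _).const_sub 1
  refine tendsto_of_tendsto_of_tendsto_of_le_of_le hlim tendsto_const_nhds (fun N => ?_) fun N => ?_
  · linarith [hh.one_sub_sum_range_add_two_le hC (x := x) (pow_nonneg hlam0 N)
      (fun y => zero_le_one.trans (hV1 y)) (hVint x)
      (hh.one_sub_sum_range_le_of_drift hC hV1 hVint hdrift hlam0 N)]
  · linarith [hh.one_sub_sum_range_nonneg hC (N + 1) x]

end Drift

end IsFirstHittingLaw

theorem stmt_12 {S : Type*} [MeasurableSpace S]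
    (P : Kernel S S) [IsMarkovKernel P]
    (C : Set S) (hC : MeasurableSet C)
    (V : S → ℝ) (hV1 : ∀ x, 1 ≤ V x)
    (hVint : ∀ x, Integrable V (P x))
    (lam K : ℝ) (hlam0 : 0 < lam) (hlam1 : lam < 1)
    (hdrift_out : ∀ x ∉ C, ∫ y, V y ∂(P x) ≤ lam * V x)
    (hdrift_in : ∀ x ∈ C, ∫ y, V y ∂(P x) ≤ K)
    -- h n x = P_x(τ = n), the distribution of the first hitting time of C
    (h : ℕ → S → ℝ) (h0 : ∀ x, h 0 x = 0)
    (h1 : ∀ x, h 1 x = (P x C).toReal)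
    (hrec : ∀ n : ℕ, 1 ≤ n → ∀ x, h (n + 1) x = ∫ y in Cᶜ, h n y ∂(P x)) :
    (∀ r : ℝ, 1 ≤ r → r ≤ lam⁻¹ →
      (∀ x ∉ C, ∑' n : ℕ, h n x * r ^ n ≤ V x) ∧
      (∀ x ∈ C, ∑' n : ℕ, h n x * r ^ n ≤ r * K)) ∧
    (∀ x, ∑' n : ℕ, h n x = 1) := by
  have hh : IsFirstHittingLaw P C h := ⟨h0, h1, fun n => hrec (n + 1) n.succ_pos⟩
  refine ⟨fun r hr1 hr2 => ?_, fun x =>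
    (hh.hasSum_one hC hV1 hVint hdrift_out hlam0.le hlam1 x).tsum_eq⟩
  have hr0 : 0 ≤ r := zero_le_one.trans hr1
  have hr : r * lam ≤ 1 := (le_div_iff₀ hlam0).mp (by rwa [one_div])
  exact ⟨fun x hx => hh.tsum_mul_pow_le_of_notMem hC hV1 hVint hdrift_out hr0 hr hx,
    fun x hx => (hh.tsum_mul_pow_le_mul_integral hC hV1 hVint hdrift_out hr0 hr x).trans
      (mul_le_mul_of_nonneg_left (hdrift_in x hx) hr0)⟩
end

section
/- Under the drift condition (PV ≤ λV off C, PV ≤ K on C, V ≥ 1, λ < 1), let H₁(r, x) = E_x[Σ_{n=1}^τ r^n] = r(G(r,x) − 1)/(r − 1). Then for 1 ≤ r ≤ λ^{-1}: H₁(r, x) ≤ rλ(V(x) − 1)/(1 − λ) for x ∉ C, and H₁(r, x) ≤ r(K − λ)/(1 − λ) for x ∈ C. -/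
/-! With `c = λ⁻¹ > 1`, the function `D = E_x[c^τ - 1]` satisfies the one-step bound
`D(x) ≤ c · E_x V(X₁) - 1`: a first-step decomposition turns `D` into `(c - 1) P_x(X₁ ∈ C)` plus an
integral over `Cᶜ` of `c D + (c - 1)`, which is at most `c V - 1` once `D ≤ V - 1` off `C`.
Off `C` the drift condition gives `c · E_x V(X₁) ≤ V(x)`, so `D ≤ V - 1` there propagates along the
truncations of `τ`; on `C` the bound is `c K - 1`. Finally `∑_{k=1}^m r^k ≤ r (c^m - 1) / (c - 1)`
for `0 ≤ r ≤ c`, which is the monotonicity of `(G(r) - 1) / (r - 1)`. -/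

open MeasureTheory ProbabilityTheory Finset Set

lemma ProbabilityTheory.Kernel.measurable_setIntegral {α β : Type*} [MeasurableSpace α]
    [MeasurableSpace β] (κ : Kernel α β) {s : Set β} (hs : MeasurableSet s) {f : β → ℝ}
    (hf : Measurable f) : Measurable fun x => ∫ y in s, f y ∂κ x :=
  (hf.stronglyMeasurable.integral_kernel (κ := κ.restrict hs)).measurable

lemma MeasureTheory.Integrable.of_mem_Icc_zero_one {α : Type*} [MeasurableSpace α]
    {μ : Measure α} [IsFiniteMeasure μ] {f : α → ℝ} (hf : Measurable f)
    (hf01 : ∀ y, f y ∈ Icc (0 : ℝ) 1) : Integrable f μ :=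
  .of_bound hf.aestronglyMeasurable 1 (.of_forall fun y => by
    rw [Real.norm_of_nonneg (hf01 y).1]; exact (hf01 y).2)

lemma MeasureTheory.setIntegral_mem_Icc_zero_one {α : Type*} [MeasurableSpace α] {μ : Measure α}
    [IsProbabilityMeasure μ] {f : α → ℝ} (hf : Measurable f) (hf01 : ∀ y, f y ∈ Icc (0 : ℝ) 1)
    (s : Set α) : ∫ y in s, f y ∂μ ∈ Icc (0 : ℝ) 1 := by
  refine ⟨integral_nonneg fun y => (hf01 y).1, ?_⟩
  calc ∫ y in s, f y ∂μ ≤ ∫ _ in s, (1 : ℝ) ∂μ :=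
        integral_mono (.of_mem_Icc_zero_one hf hf01) (integrable_const 1) fun y => (hf01 y).2
    _ = μ.real s := by simp
    _ ≤ 1 := measureReal_le_one

lemma sub_one_mul_sum_Icc_pow_le {r c : ℝ} (hr : 0 ≤ r) (hrc : r ≤ c) (hc : 1 ≤ c) (m : ℕ) :
    (c - 1) * ∑ k ∈ Icc 1 m, r ^ k ≤ r * (c ^ m - 1) := by
  induction m with
  | zero => simp
  | succ m ih =>
    rw [sum_Icc_succ_top (by omega), pow_succ', pow_succ']
    have := mul_le_mul_of_nonneg_left (pow_le_pow_left₀ hr hrc m) (mul_nonneg hr (sub_nonneg.2 hc))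
    linarith

lemma tsum_mul_sum_Icc_pow_le {a : ℕ → ℝ} {r c B : ℝ} (ha : ∀ m, 0 ≤ a (m + 1)) (hr : 0 ≤ r)
    (hrc : r ≤ c) (hc : 1 < c) (hB : ∀ N, ∑ k ∈ range N, (c ^ (k + 1) - 1) * a (k + 1) ≤ B) :
    ∑' m, a m * ∑ k ∈ Icc 1 m, r ^ k ≤ r * B / (c - 1) := by
  set f : ℕ → ℝ := fun m => a m * ∑ k ∈ Icc 1 m, r ^ k
  have hf_succ : ∀ k, f (k + 1) * (c - 1) ≤ r * ((c ^ (k + 1) - 1) * a (k + 1)) := fun k => by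
    have := mul_le_mul_of_nonneg_left (sub_one_mul_sum_Icc_pow_le hr hrc hc.le (k + 1)) (ha k)
    simp only [f]
    linarith
  have hf : ∀ m, 0 ≤ f m
    | 0 => by simp [f]
    | k + 1 => mul_nonneg (ha k) (sum_nonneg fun i _ => pow_nonneg hr i)
  refine Real.tsum_le_of_sum_range_le hf fun N => ?_
  rw [le_div_iff₀ (sub_pos.2 hc)]
  calc (∑ m ∈ range N, f m) * (c - 1) ≤ (∑ m ∈ range (N + 1), f m) * (c - 1) := by
        refine mul_le_mul_of_nonneg_right ?_ (sub_nonneg.2 hc.le)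
        exact sum_le_sum_of_subset_of_nonneg (range_subset_range.2 N.le_succ) fun m _ _ => hf m
    _ = ∑ k ∈ range N, f (k + 1) * (c - 1) := by simp [sum_range_succ', f, sum_mul]
    _ ≤ ∑ k ∈ range N, r * ((c ^ (k + 1) - 1) * a (k + 1)) := sum_le_sum fun k _ => hf_succ k
    _ ≤ r * B := by rw [← mul_sum]; exact mul_le_mul_of_nonneg_left (hB N) hr

section FirstReturn

variable {S : Type*} [MeasurableSpace S] {P : Kernel S S} {C : Set S} {p : ℕ → S → ℝ}

/-- `p n x` is `P_x(τ = n + 1)`, where `τ ≥ 1` is the first return time to `C`. -/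
structure IsFirstReturnLaw (P : Kernel S S) (C : Set S) (p : ℕ → S → ℝ) : Prop where
  zero : ∀ x, p 0 x = (P x).real C
  succ : ∀ n x, p (n + 1) x = ∫ y in Cᶜ, p n y ∂P x

namespace IsFirstReturnLaw

variable [IsMarkovKernel P]

lemma measurable_and_mem_Icc (hp : IsFirstReturnLaw P C p) (hC : MeasurableSet C) (n : ℕ) :
    Measurable (p n) ∧ ∀ x, p n x ∈ Icc (0 : ℝ) 1 := by
  induction n with
  | zero =>
    simp_rw [funext hp.zero]
    exact ⟨(P.measurable_coe hC).ennreal_toReal,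
      fun x => ⟨measureReal_nonneg, measureReal_le_one⟩⟩
  | succ n ih =>
    simp_rw [funext (hp.succ n)]
    exact ⟨P.measurable_setIntegral hC.compl ih.1,
      fun x => setIntegral_mem_Icc_zero_one ih.1 ih.2 _⟩

lemma integrable (hp : IsFirstReturnLaw P C p) (hC : MeasurableSet C) (n : ℕ) (x : S) :
    Integrable (p n) (P x) :=
  have h := hp.measurable_and_mem_Icc hC n
  .of_mem_Icc_zero_one h.1 h.2

lemma sum_range_succ (hp : IsFirstReturnLaw P C p) (hC : MeasurableSet C) (w : ℕ → ℝ) (N : ℕ)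
    (x : S) : ∑ k ∈ range (N + 1), w k * p k x =
      w 0 * (P x).real C + ∫ y in Cᶜ, ∑ k ∈ range N, w (k + 1) * p k y ∂P x := by
  rw [sum_range_succ', add_comm, hp.zero, integral_finsetSum _ fun k _ =>
    ((hp.integrable hC k x).const_mul _).integrableOn]
  simp_rw [hp.succ, integral_const_mul]

lemma sum_range_le_one (hp : IsFirstReturnLaw P C p) (hC : MeasurableSet C) (N : ℕ) (x : S) :
    ∑ k ∈ range N, p k x ≤ 1 := by
  induction N generalizing x with
  | zero => simp
  | succ N ih =>
    have hstep := hp.sum_range_succ hC (fun _ => 1) N x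
    simp only [one_mul] at hstep
    rw [hstep, ← probReal_add_probReal_compl (μ := P x) hC]
    gcongr
    calc ∫ y in Cᶜ, ∑ k ∈ range N, p k y ∂P x ≤ ∫ _ in Cᶜ, (1 : ℝ) ∂P x :=
          integral_mono (integrable_finsetSum _ fun k _ => hp.integrable hC k x).integrableOn
            (integrable_const 1) ih
      _ = (P x).real Cᶜ := by simp

variable {V : S → ℝ} {c : ℝ}

lemma sum_range_succ_le_drift (hp : IsFirstReturnLaw P C p) (hC : MeasurableSet C)
    (hV1 : ∀ y, 1 ≤ V y) (hVint : ∀ x, Integrable V (P x)) (hc : 1 ≤ c) {N : ℕ}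
    (hD : ∀ y ∉ C, ∑ k ∈ range N, (c ^ (k + 1) - 1) * p k y ≤ V y - 1) (x : S) :
    ∑ k ∈ range (N + 1), (c ^ (k + 1) - 1) * p k x ≤ c * ∫ y, V y ∂P x - 1 := by
  have hshift : ∀ y, ∑ k ∈ range N, (c ^ (k + 1 + 1) - 1) * p k y =
      c * ∑ k ∈ range N, (c ^ (k + 1) - 1) * p k y + (c - 1) * ∑ k ∈ range N, p k y := fun y => by
    simp only [mul_sum, ← sum_add_distrib]
    exact sum_congr rfl fun k _ => by ring
  have hinner : ∫ y in Cᶜ, ∑ k ∈ range N, (c ^ (k + 1 + 1) - 1) * p k y ∂P x ≤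
      ∫ y in Cᶜ, (c * V y - 1) ∂P x := by
    refine setIntegral_mono_on
      (integrable_finsetSum _ fun k _ => (hp.integrable hC k x).const_mul _).integrableOn
      (((hVint x).const_mul c).sub (integrable_const 1)).integrableOn hC.compl fun y hy => ?_
    rw [hshift]
    nlinarith [hD y hy, hp.sum_range_le_one hC N y]
  have hout : ∫ y in Cᶜ, (c * V y - 1) ∂P x = c * ∫ y in Cᶜ, V y ∂P x - (P x).real Cᶜ := by
    rw [integral_sub ((hVint x).const_mul c).integrableOn (integrable_const 1).integrableOn,
      integral_const_mul]
    simp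
  have hin : (P x).real C ≤ ∫ y in C, V y ∂P x := by
    simpa using setIntegral_ge_of_const_le_real hC (measure_ne_top _ _) (fun y _ => hV1 y)
      (hVint x).integrableOn
  have hmass := probReal_add_probReal_compl (μ := P x) hC
  have hcin := mul_le_mul_of_nonneg_left hin (by linarith : (0 : ℝ) ≤ c)
  rw [hp.sum_range_succ hC, ← integral_add_compl hC (hVint x), zero_add, pow_one]
  linarith

lemma sum_range_le_drift (hp : IsFirstReturnLaw P C p) (hC : MeasurableSet C)
    (hV1 : ∀ y, 1 ≤ V y) (hVint : ∀ x, Integrable V (P x)) (hc : 1 ≤ c)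
    (hdrift : ∀ y ∉ C, c * ∫ z, V z ∂P y ≤ V y) (N : ℕ) (x : S) :
    ∑ k ∈ range N, (c ^ (k + 1) - 1) * p k x ≤ c * ∫ y, V y ∂P x - 1 := by
  induction N generalizing x with
  | zero =>
    have : 1 ≤ ∫ y, V y ∂P x := by
      simpa using integral_mono (integrable_const 1) (hVint x) hV1
    simp only [range_zero, sum_empty]
    nlinarith
  | succ N ih =>
    exact hp.sum_range_succ_le_drift hC hV1 hVint hc (fun y hy => (ih y).trans (by
      linarith [hdrift y hy])) x

end IsFirstReturnLaw

end FirstReturn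

theorem stmt_13_general {S : Type*} [MeasurableSpace S]
    (P : Kernel S S) [IsMarkovKernel P]
    (C : Set S) (hC : MeasurableSet C)
    (V : S → ℝ) (hV1 : ∀ x, 1 ≤ V x)
    (hVint : ∀ x, Integrable V (P x))
    (lam K : ℝ) (hlam0 : 0 < lam) (hlam1 : lam < 1)
    (hdrift_out : ∀ x ∉ C, ∫ y, V y ∂(P x) ≤ lam * V x)
    (hdrift_in : ∀ x ∈ C, ∫ y, V y ∂(P x) ≤ K)
    -- h n x = P_x(τ = n), the distribution of the first return time to C
    (h : ℕ → S → ℝ)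
    (h1 : ∀ x, h 1 x = (P x C).toReal)
    (hrec : ∀ n : ℕ, 1 ≤ n → ∀ x, h (n + 1) x = ∫ y in Cᶜ, h n y ∂(P x))
    -- H₁(r,x) = E_x[Σ_{n=1}^τ r^n]
    (H₁ : ℝ → S → ℝ)
    (hH₁ : ∀ r x, H₁ r x = ∑' m : ℕ, h m x * ∑ k ∈ Finset.Icc 1 m, r ^ k) :
    ∀ r : ℝ, 1 ≤ r → r ≤ lam⁻¹ →
      (∀ x ∉ C, H₁ r x ≤ r * lam * (V x - 1) / (1 - lam)) ∧
      (∀ x ∈ C, H₁ r x ≤ r * (K - lam) / (1 - lam)) := by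
  intro r hr1 hr
  have hc : 1 < lam⁻¹ := (one_lt_inv₀ hlam0).2 hlam1
  have hp : IsFirstReturnLaw P C fun n => h (n + 1) :=
    ⟨h1, fun n => hrec (n + 1) n.succ_pos⟩
  have hdrift : ∀ y ∉ C, lam⁻¹ * ∫ z, V z ∂P y ≤ V y := fun y hy => by
    rw [inv_mul_le_iff₀ hlam0]; exact hdrift_out y hy
  have hbound : ∀ x, H₁ r x ≤ r * (∫ y, V y ∂P x - lam) / (1 - lam) := fun x => by
    have hnonneg : ∀ m, 0 ≤ h (m + 1) x := fun m => ((hp.measurable_and_mem_Icc hC m).2 x).1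
    calc H₁ r x ≤ r * (lam⁻¹ * ∫ y, V y ∂P x - 1) / (lam⁻¹ - 1) := by
          rw [hH₁]
          exact tsum_mul_sum_Icc_pow_le (a := (h · x)) hnonneg (by linarith) hr hc
            (hp.sum_range_le_drift hC hV1 hVint hc.le hdrift · x)
      _ = r * (∫ y, V y ∂P x - lam) / (1 - lam) := by field_simp
  have hlam : 0 < 1 - lam := sub_pos.2 hlam1
  refine ⟨fun x hx => (hbound x).trans ?_, fun x hx => (hbound x).trans ?_⟩
  · rw [mul_assoc]
    gcongr
    linarith [hdrift_out x hx]
  · gcongr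
    exact hdrift_in x hx

theorem stmt_13 {S : Type*} [MeasurableSpace S]
    (P : Kernel S S) [IsMarkovKernel P]
    (C : Set S) (hC : MeasurableSet C)
    (V : S → ℝ) (hV1 : ∀ x, 1 ≤ V x)
    (hVint : ∀ x, Integrable V (P x))
    (lam K : ℝ) (hlam0 : 0 < lam) (hlam1 : lam < 1)
    (hdrift_out : ∀ x ∉ C, ∫ y, V y ∂(P x) ≤ lam * V x)
    (hdrift_in : ∀ x ∈ C, ∫ y, V y ∂(P x) ≤ K)
    -- h n x = P_x(τ = n), the distribution of the first return time to C
    (h : ℕ → S → ℝ) (h0 : ∀ x, h 0 x = 0)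
    (h1 : ∀ x, h 1 x = (P x C).toReal)
    (hrec : ∀ n : ℕ, 1 ≤ n → ∀ x, h (n + 1) x = ∫ y in Cᶜ, h n y ∂(P x))
    -- H₁(r,x) = E_x[Σ_{n=1}^τ r^n]
    (H₁ : ℝ → S → ℝ)
    (hH₁ : ∀ r x, H₁ r x = ∑' m : ℕ, h m x * ∑ k ∈ Finset.Icc 1 m, r ^ k) :
    ∀ r : ℝ, 1 ≤ r → r ≤ lam⁻¹ →
      (∀ x ∉ C, H₁ r x ≤ r * lam * (V x - 1) / (1 - lam)) ∧
      (∀ x ∈ C, H₁ r x ≤ r * (K - lam) / (1 - lam)) :=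
  stmt_13_general P C hC V hV1 hVint lam K hlam0 hlam1 hdrift_out hdrift_in h h1 hrec H₁ hH₁
end

section
/- Under the drift condition, for a ∈ C (an atom) and 1 ≤ r ≤ λ^{-1}: (H₁(r,a) − r·H₁(1,a))/(r − 1) ≤ rλ(K − 1)/(1 − λ)², where H₁(r,a) = E_a[Σ_{n=1}^τ r^n] and H₁(1,a) = E_a τ. -/
/-!
Write `p m = P_a(τ = m)` and `D_t(m) = ∑_{k<m} ∑_{j<k} t^j`. Then
`H₁(t,a) - t H₁(1,a) = t (t - 1) ∑ p_m D_t(m)`, and `D_t(m)` is nondecreasing in `t`, so for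
`s ≤ r = λ⁻¹` the left-hand side is at most
`s ∑ p_m D_r(m) = s ∑ p_m (r^m - 1 - (r - 1) m) / (r - 1)²`.

The drift condition bounds this last series by first-step analysis. Truncating at level `n`, one
step of the chain from `x` gives `∑ h_m(x) (r^m - 1) ≤ r PV(x) - 1`, which is `≤ V(x) - 1` off `C`;
this is an induction on `n`. One more step from the atom then gives
`∑ p_m (r^m - 1 - (r - 1) m) ≤ r (PV(a) - 1) ≤ r (K - 1)`, and `r / (r - 1)² = λ / (1 - λ)²`.
-/

open MeasureTheory ProbabilityTheory Finset

theorem Finset.sum_Icc_one_succ (f : ℕ → ℝ) (n : ℕ) :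
    ∑ m ∈ Icc 1 (n + 1), f m = f 1 + ∑ m ∈ Icc 1 n, f (m + 1) := by
  rw [← insert_Icc_add_one_left_eq_Icc (by omega), sum_insert (by simp), ← map_add_right_Icc,
    sum_map]
  rfl

theorem summable_and_tsum_le_of_sum_Icc_le {f : ℕ → ℝ} (hf : ∀ n, 0 ≤ f n) (hf0 : f 0 = 0)
    {c : ℝ} (h : ∀ n, ∑ m ∈ Icc 1 n, f m ≤ c) : Summable f ∧ ∑' n, f n ≤ c := by
  have hrange (n : ℕ) : ∑ m ∈ range n, f m ≤ c :=
    calc ∑ m ∈ range n, f m ≤ ∑ m ∈ range (n + 1), f m :=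
          sum_le_sum_of_subset_of_nonneg (range_subset_range.2 n.le_succ) fun m _ _ => hf m
      _ = ∑ m ∈ Icc 1 n, f m := by
          rw [sum_range_succ', hf0, add_zero, ← Ico_add_one_right_eq_Icc, sum_Ico_eq_sum_range]
          simp only [add_tsub_cancel_right, add_comm]
      _ ≤ c := h n
  exact ⟨summable_of_sum_range_le hf hrange, Real.tsum_le_of_sum_range_le hf hrange⟩

def doubleGeomSum (t : ℝ) (m : ℕ) : ℝ := ∑ k ∈ range m, ∑ j ∈ range k, t ^ j

theorem doubleGeomSum_succ (t : ℝ) (m : ℕ) :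
    doubleGeomSum t (m + 1) = doubleGeomSum t m + ∑ j ∈ range m, t ^ j :=
  sum_range_succ _ m

theorem sum_Icc_pow_sub_mul_eq (t : ℝ) (m : ℕ) :
    ∑ k ∈ Icc 1 m, t ^ k - t * m = t * (t - 1) * doubleGeomSum t m := by
  induction m with
  | zero => simp [doubleGeomSum]
  | succ m ih =>
    rw [sum_Icc_succ_top (by omega), doubleGeomSum_succ]
    push_cast
    linear_combination ih - t * geom_sum_mul t m

theorem sub_one_sq_mul_doubleGeomSum (t : ℝ) (m : ℕ) :
    (t - 1) ^ 2 * doubleGeomSum t m = t ^ m - 1 - (t - 1) * m := by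
  induction m with
  | zero => simp [doubleGeomSum]
  | succ m ih =>
    rw [doubleGeomSum_succ]
    push_cast
    linear_combination ih + (t - 1) * geom_sum_mul t m

theorem doubleGeomSum_nonneg {t : ℝ} (ht : 0 ≤ t) (m : ℕ) : 0 ≤ doubleGeomSum t m := by
  unfold doubleGeomSum
  positivity

theorem doubleGeomSum_mono {s t : ℝ} (hs : 0 ≤ s) (hst : s ≤ t) (m : ℕ) :
    doubleGeomSum s m ≤ doubleGeomSum t m := by
  unfold doubleGeomSum
  gcongr

theorem sub_one_mul_le_pow_sub_one {t : ℝ} (ht : 0 ≤ t) (m : ℕ) : (t - 1) * m ≤ t ^ m - 1 := by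
  have := one_add_mul_le_pow (a := t - 1) (by linarith) m
  rw [add_sub_cancel] at this
  linarith

theorem tsum_sub_div_le {p : ℕ → ℝ} (hp : ∀ m, 0 ≤ p m) {s r : ℝ} (hs : 1 < s) (hsr : s ≤ r)
    (hsum : Summable fun m => p m * (r ^ m - 1)) :
    (∑' m, p m * ∑ k ∈ Icc 1 m, s ^ k - s * ∑' m, p m * m) / (s - 1)
      ≤ s * (∑' m, p m * (r ^ m - 1 - (r - 1) * m)) / (r - 1) ^ 2 := by
  have hr : 0 < r - 1 := by linarith
  have hDr : Summable fun m => p m * doubleGeomSum r m := by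
    refine (hsum.div_const ((r - 1) ^ 2)).of_nonneg_of_le
      (fun m => mul_nonneg (hp m) (doubleGeomSum_nonneg (by linarith) m)) fun m => ?_
    rw [le_div_iff₀ (by positivity), mul_assoc, mul_comm (doubleGeomSum r m),
      sub_one_sq_mul_doubleGeomSum]
    have : 0 ≤ (r - 1) * m := by positivity
    exact mul_le_mul_of_nonneg_left (by linarith) (hp m)
  have hDs : Summable fun m => p m * doubleGeomSum s m :=
    hDr.of_nonneg_of_le (fun m => mul_nonneg (hp m) (doubleGeomSum_nonneg (by linarith) m))
      fun m => mul_le_mul_of_nonneg_left (doubleGeomSum_mono (by linarith) hsr m) (hp m)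
  have hm : Summable fun m => p m * m := by
    refine (hsum.div_const (r - 1)).of_nonneg_of_le (fun m => by have := hp m; positivity)
      fun m => ?_
    rw [le_div_iff₀ hr, mul_assoc, mul_comm (m : ℝ)]
    exact mul_le_mul_of_nonneg_left (sub_one_mul_le_pow_sub_one (by linarith) m) (hp m)
  have hnum : ∑' m, p m * ∑ k ∈ Icc 1 m, s ^ k - s * ∑' m, p m * m
      = s * (s - 1) * ∑' m, p m * doubleGeomSum s m := by
    have hS : Summable fun m => p m * ∑ k ∈ Icc 1 m, s ^ k := by
      refine ((hm.mul_left s).add (hDs.mul_left (s * (s - 1)))).congr fun m => ?_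
      linear_combination (-1) * p m * sum_Icc_pow_sub_mul_eq s m
    rw [← tsum_mul_left, ← hS.tsum_sub (hm.mul_left s), ← tsum_mul_left]
    congr 1 with m
    linear_combination p m * sum_Icc_pow_sub_mul_eq s m
  have hu : ∑' m, p m * (r ^ m - 1 - (r - 1) * m)
      = (r - 1) ^ 2 * ∑' m, p m * doubleGeomSum r m := by
    rw [← tsum_mul_left]
    congr 1 with m
    rw [← sub_one_sq_mul_doubleGeomSum]
    ring
  have hs1 : s - 1 ≠ 0 := by linarith
  rw [hnum, hu, mul_comm s, mul_assoc, mul_div_cancel_left₀ _ hs1, mul_left_comm,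
    mul_div_cancel_left₀ _ (by positivity)]
  refine mul_le_mul_of_nonneg_left (hDs.tsum_le_tsum (fun m => mul_le_mul_of_nonneg_left
    (doubleGeomSum_mono (by linarith) hsr m) (hp m)) hDr) (by linarith)

theorem tsum_sub_div_le_of_sum_Icc_le {p : ℕ → ℝ} (hp : ∀ m, 0 ≤ p m) {s r A B : ℝ}
    (hs : 1 < s) (hsr : s ≤ r) (hA : ∀ n, ∑ m ∈ Icc 1 n, p m * (r ^ m - 1) ≤ A)
    (hB : ∀ n, ∑ m ∈ Icc 1 n, p m * (r ^ m - 1 - (r - 1) * m) ≤ B) :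
    (∑' m, p m * ∑ k ∈ Icc 1 m, s ^ k - s * ∑' m, p m * m) / (s - 1)
      ≤ s * B / (r - 1) ^ 2 := by
  have hr : 0 ≤ r := by linarith
  have hsum := (summable_and_tsum_le_of_sum_Icc_le
    (fun m => mul_nonneg (hp m) (sub_nonneg.2 (one_le_pow₀ (by linarith)))) (by simp) hA).1
  have htsum := (summable_and_tsum_le_of_sum_Icc_le
    (fun m => mul_nonneg (hp m) (sub_nonneg.2 (sub_one_mul_le_pow_sub_one hr m))) (by simp) hB).2
  exact (tsum_sub_div_le hp hs hsr hsum).trans (by gcongr)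

theorem one_le_integral_of_forall_one_le {S : Type*} [MeasurableSpace S] {μ : Measure S}
    [IsProbabilityMeasure μ] {V : S → ℝ} (hV1 : ∀ y, 1 ≤ V y) (hVint : Integrable V μ) :
    1 ≤ ∫ y, V y ∂μ := by
  simpa using integral_mono (integrable_const 1) hVint hV1

section FirstReturn

variable {S : Type*} [MeasurableSpace S] {P : Kernel S S} {C : Set S} {h : ℕ → S → ℝ}

/-- `h n x = P_x(τ = n)`, where `τ ≥ 1` is the first return time to `C`. -/
structure IsFirstReturnDist (P : Kernel S S) (C : Set S) (h : ℕ → S → ℝ) : Prop where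
  zero : ∀ x, h 0 x = 0
  one : ∀ x, h 1 x = (P x).real C
  succ : ∀ n, 1 ≤ n → ∀ x, h (n + 1) x = ∫ y in Cᶜ, h n y ∂P x

namespace IsFirstReturnDist

variable [IsMarkovKernel P]

theorem measurable_and_mem_Icc (hh : IsFirstReturnDist P C h) (hC : MeasurableSet C) :
    ∀ n, Measurable (h n) ∧ ∀ x, h n x ∈ Set.Icc 0 1
  | 0 => ⟨by rw [funext hh.zero]; exact measurable_const, fun x => by simp [hh.zero]⟩
  | 1 => ⟨by rw [funext hh.one]; exact (P.measurable_coe hC).ennreal_toReal,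
      fun x => hh.one x ▸ ⟨measureReal_nonneg, measureReal_le_one⟩⟩
  | n + 2 => by
    obtain ⟨hmeas, hbound⟩ := measurable_and_mem_Icc hh hC (n + 1)
    refine ⟨?_, fun x => ?_⟩
    · have : h (n + 2) = fun x => ∫ y, h (n + 1) y ∂P.restrict hC.compl x :=
        funext (hh.succ (n + 1) le_add_self)
      rw [this]
      exact hmeas.stronglyMeasurable.integral_kernel.measurable
    · rw [hh.succ (n + 1) le_add_self]
      refine ⟨setIntegral_nonneg hC.compl fun y _ => (hbound y).1, ?_⟩
      calc ∫ y in Cᶜ, h (n + 1) y ∂P x ≤ ‖∫ y in Cᶜ, h (n + 1) y ∂P x‖ := Real.le_norm_self _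
        _ ≤ 1 * (P x).real Cᶜ := norm_setIntegral_le_of_norm_le_const (measure_lt_top _ _)
            fun y _ => by rw [Real.norm_of_nonneg (hbound y).1]; exact (hbound y).2
        _ ≤ 1 := by rw [one_mul]; exact measureReal_le_one

theorem nonneg (hh : IsFirstReturnDist P C h) (hC : MeasurableSet C) (n : ℕ) (x : S) :
    0 ≤ h n x :=
  ((hh.measurable_and_mem_Icc hC n).2 x).1

theorem integrable (hh : IsFirstReturnDist P C h) (hC : MeasurableSet C) (n : ℕ)
    (μ : Measure S) [IsFiniteMeasure μ] : Integrable (h n) μ := by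
  obtain ⟨hmeas, hbound⟩ := hh.measurable_and_mem_Icc hC n
  refine .of_bound hmeas.aestronglyMeasurable 1 (.of_forall fun x => ?_)
  rw [Real.norm_of_nonneg (hbound x).1]
  exact (hbound x).2

theorem sum_Icc_succ (hh : IsFirstReturnDist P C h) (hC : MeasurableSet C) (w : ℕ → ℝ)
    (n : ℕ) (x : S) :
    ∑ m ∈ Icc 1 (n + 1), h m x * w m
      = (P x).real C * w 1 + ∫ y in Cᶜ, ∑ m ∈ Icc 1 n, h m y * w (m + 1) ∂P x := by
  rw [sum_Icc_one_succ, hh.one, integral_finsetSum _ fun m _ =>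
    ((hh.integrable hC m _).mul_const _).integrableOn]
  congr 1
  refine sum_congr rfl fun m hm => ?_
  rw [integral_mul_const, hh.succ m (mem_Icc.mp hm).1]

theorem sum_le_one (hh : IsFirstReturnDist P C h) (hC : MeasurableSet C) :
    ∀ n x, ∑ m ∈ Icc 1 n, h m x ≤ 1
  | 0, x => by simp
  | n + 1, x => by
    have hstep := hh.sum_Icc_succ hC 1 n x
    simp only [Pi.one_apply, mul_one] at hstep
    rw [hstep, ← probReal_add_probReal_compl (μ := P x) hC]
    gcongr
    calc ∫ y in Cᶜ, ∑ m ∈ Icc 1 n, h m y ∂P x ≤ ∫ y in Cᶜ, 1 ∂P x :=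
          setIntegral_mono_on (integrable_finsetSum _ fun m _ =>
            hh.integrable hC m _).integrableOn (integrable_const 1).integrableOn hC.compl
            fun y _ => sum_le_one hh hC n y
      _ = (P x).real Cᶜ := by rw [setIntegral_const, smul_eq_mul, mul_one]

theorem sum_Icc_succ_le (hh : IsFirstReturnDist P C h) (hC : MeasurableSet C) {V : S → ℝ}
    (hV1 : ∀ y, 1 ≤ V y) {x : S} (hVint : Integrable V (P x)) {r β : ℝ} (hr : 0 ≤ r)
    (hβ : 0 ≤ β) {w : ℕ → ℝ} (hw : ∀ m, w (m + 1) ≤ r * (r ^ m - 1) + β) {n : ℕ}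
    (hV : ∀ y ∉ C, ∑ m ∈ Icc 1 n, h m y * (r ^ m - 1) ≤ V y - 1) :
    ∑ m ∈ Icc 1 (n + 1), h m x * w m
      ≤ (P x).real C * w 1 + (P x).real Cᶜ * β + r * (∫ y, V y ∂P x - 1) := by
  have hpoint : ∀ y ∈ Cᶜ, ∑ m ∈ Icc 1 n, h m y * w (m + 1) ≤ r * (V y - 1) + β := fun y hy =>
    calc ∑ m ∈ Icc 1 n, h m y * w (m + 1)
        ≤ ∑ m ∈ Icc 1 n, h m y * (r * (r ^ m - 1) + β) :=
          sum_le_sum fun m _ => mul_le_mul_of_nonneg_left (hw m) (hh.nonneg hC m y)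
      _ = r * ∑ m ∈ Icc 1 n, h m y * (r ^ m - 1) + β * ∑ m ∈ Icc 1 n, h m y := by
          rw [mul_sum, mul_sum, ← sum_add_distrib]
          exact sum_congr rfl fun m _ => by ring
      _ ≤ r * (V y - 1) + β * 1 := by
          gcongr
          exacts [hV y hy, hh.sum_le_one hC n y]
      _ = r * (V y - 1) + β := by rw [mul_one]
  have hVsub : Integrable (fun y => V y - 1) (P x) := hVint.sub (integrable_const 1)
  have hcompl : ∫ y in Cᶜ, (V y - 1) ∂P x ≤ ∫ y, V y ∂P x - 1 :=
    calc ∫ y in Cᶜ, (V y - 1) ∂P x ≤ ∫ y, (V y - 1) ∂P x :=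
          setIntegral_le_integral hVsub (.of_forall fun y => sub_nonneg.2 (hV1 y))
      _ = ∫ y, V y ∂P x - 1 := by simp [integral_sub hVint (integrable_const 1)]
  rw [hh.sum_Icc_succ hC]
  calc (P x).real C * w 1 + ∫ y in Cᶜ, ∑ m ∈ Icc 1 n, h m y * w (m + 1) ∂P x
      ≤ (P x).real C * w 1 + ∫ y in Cᶜ, (r * (V y - 1) + β) ∂P x :=
        (add_le_add_iff_left _).2 (setIntegral_mono_on (integrable_finsetSum _ fun m _ =>
          (hh.integrable hC m _).mul_const _).integrableOn
          ((hVsub.const_mul r).add (integrable_const β)).integrableOn hC.compl hpoint)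
    _ = (P x).real C * w 1 + (P x).real Cᶜ * β + r * ∫ y in Cᶜ, (V y - 1) ∂P x := by
        rw [integral_add (hVsub.const_mul r).integrableOn (integrable_const β),
          integral_const_mul, setIntegral_const, smul_eq_mul]
        ring
    _ ≤ (P x).real C * w 1 + (P x).real Cᶜ * β + r * (∫ y, V y ∂P x - 1) := by gcongr

theorem sum_Icc_mul_pow_sub_one_le (hh : IsFirstReturnDist P C h) (hC : MeasurableSet C)
    {V : S → ℝ} (hV1 : ∀ y, 1 ≤ V y) (hVint : ∀ x, Integrable V (P x)) {r : ℝ} (hr : 1 ≤ r)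
    (hdrift : ∀ x ∉ C, r * ∫ y, V y ∂P x ≤ V x) :
    ∀ n x, ∑ m ∈ Icc 1 n, h m x * (r ^ m - 1) ≤ r * ∫ y, V y ∂P x - 1
  | 0, x => by
    have := one_le_integral_of_forall_one_le hV1 (hVint x)
    rw [Icc_eq_empty_of_lt zero_lt_one, sum_empty]
    nlinarith
  | n + 1, x => by
    have hstep := hh.sum_Icc_succ_le hC hV1 (hVint x) (by linarith) (sub_nonneg.2 hr)
      (w := fun m => r ^ m - 1) (fun m => by rw [pow_succ]; linarith) (n := n)
      fun y hy => (sum_Icc_mul_pow_sub_one_le hh hC hV1 hVint hr hdrift n y).trans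
        (by linarith [hdrift y hy])
    have hsplit := probReal_add_probReal_compl (μ := P x) hC
    simp only [pow_one] at hstep
    linear_combination hstep + (r - 1) * hsplit

theorem sum_Icc_mul_pow_sub_one_sub_le (hh : IsFirstReturnDist P C h) (hC : MeasurableSet C)
    {V : S → ℝ} (hV1 : ∀ y, 1 ≤ V y) (hVint : ∀ x, Integrable V (P x)) {r : ℝ} (hr : 1 ≤ r)
    (hdrift : ∀ x ∉ C, r * ∫ y, V y ∂P x ≤ V x) :
    ∀ n x, ∑ m ∈ Icc 1 n, h m x * (r ^ m - 1 - (r - 1) * m) ≤ r * (∫ y, V y ∂P x - 1)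
  | 0, x => by
    have := one_le_integral_of_forall_one_le hV1 (hVint x)
    rw [Icc_eq_empty_of_lt zero_lt_one, sum_empty]
    nlinarith
  | n + 1, x => by
    have hstep := hh.sum_Icc_succ_le hC hV1 (hVint x) (by linarith) le_rfl
      (w := fun m => r ^ m - 1 - (r - 1) * m)
      (fun m => by
        rw [pow_succ]
        push_cast
        nlinarith [mul_nonneg (sub_nonneg.2 hr) m.cast_nonneg]) (n := n)
      fun y hy => (hh.sum_Icc_mul_pow_sub_one_le hC hV1 hVint hr hdrift n y).trans
        (by linarith [hdrift y hy])
    simpa using hstep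

end IsFirstReturnDist

end FirstReturn

theorem stmt_14 {S : Type*} [MeasurableSpace S]
    (P : Kernel S S) [IsMarkovKernel P]
    (C : Set S) (hC : MeasurableSet C)
    (V : S → ℝ) (hV1 : ∀ x, 1 ≤ V x)
    (hVint : ∀ x, Integrable V (P x))
    (lam K : ℝ) (hlam0 : 0 < lam) (hlam1 : lam < 1)
    (hdrift_out : ∀ x ∉ C, ∫ y, V y ∂(P x) ≤ lam * V x)
    (hdrift_in : ∀ x ∈ C, ∫ y, V y ∂(P x) ≤ K)
    -- h n x = P_x(τ = n), the distribution of the first return time to C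
    (h : ℕ → S → ℝ) (h0 : ∀ x, h 0 x = 0)
    (h1 : ∀ x, h 1 x = (P x C).toReal)
    (hrec : ∀ n : ℕ, 1 ≤ n → ∀ x, h (n + 1) x = ∫ y in Cᶜ, h n y ∂(P x))
    (H₁ : ℝ → S → ℝ)
    (hH₁ : ∀ r x, H₁ r x = ∑' m : ℕ, h m x * ∑ k ∈ Finset.Icc 1 m, r ^ k)
    (a : S) (ha : a ∈ C) :
    ∀ r : ℝ, 1 < r → r ≤ lam⁻¹ →
      (H₁ r a - r * H₁ 1 a) / (r - 1) ≤ r * lam * (K - 1) / (1 - lam) ^ 2 := by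
  intro s hs hsr
  have hr : 1 < lam⁻¹ := one_lt_inv_iff₀.mpr ⟨hlam0, hlam1⟩
  have hh : IsFirstReturnDist P C h := ⟨h0, h1, hrec⟩
  have hdrift : ∀ x ∉ C, lam⁻¹ * ∫ y, V y ∂P x ≤ V x := fun x hx => by
    rw [inv_mul_le_iff₀ hlam0]
    exact hdrift_out x hx
  have hKa : lam⁻¹ * ∫ y, V y ∂P a ≤ lam⁻¹ * K := by
    gcongr
    exact hdrift_in a ha
  have hH₁_one : H₁ 1 a = ∑' m, h m a * m := by simp [hH₁]
  rw [hH₁ s a, hH₁_one]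
  calc _ ≤ s * (lam⁻¹ * (K - 1)) / (lam⁻¹ - 1) ^ 2 :=
        tsum_sub_div_le_of_sum_Icc_le (hh.nonneg hC · a) hs hsr
          (fun n => (hh.sum_Icc_mul_pow_sub_one_le hC hV1 hVint hr.le hdrift n a).trans
            (sub_le_sub_right hKa 1))
          (fun n => (hh.sum_Icc_mul_pow_sub_one_sub_le hC hV1 hVint hr.le hdrift n a).trans
            (by linarith))
    _ = s * lam * (K - 1) / (1 - lam) ^ 2 := by
        field_simp
end

section
/- Fix b ∈ (0,1), and for α ≥ 1 define D(α) = (|1 + (b/(1−b))(1 − e^{iπ/(1+α)})| − 1)/|1 − e^{iπ/(1+α)}|. Then lim_{α→∞} α·D(α) = bπ/(2(1−b)²). -/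
/-!
Put `c = b / (1 - b)`, `w = exp (i π / (1 + α))` and `r = ‖1 - w‖`. On the unit circle
`Re (1 - w) = ‖1 - w‖² / 2`, so `‖1 + c (1 - w)‖² = 1 + K r²` with `K = c (1 + c) = b / (1 - b)²`.
Rationalising, `D α = (√(1 + K r²) - 1) / r = K r / (√(1 + K r²) + 1)`, and since
`r ~ π / (1 + α)` (the derivative of `t ↦ exp (i t)` at `0` has norm `1`), `α D α → K π / 2`.
-/

open Real Filter Topology

theorem norm_one_add_mul_one_sub_sq {w : ℂ} (hw : ‖w‖ = 1) (c : ℝ) :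
    ‖1 + (c : ℂ) * (1 - w)‖ ^ 2 = 1 + c * (1 + c) * ‖1 - w‖ ^ 2 := by
  have hw' : w.re * w.re + w.im * w.im = 1 := by
    rw [← Complex.normSq_apply, ← Complex.sq_norm, hw, one_pow]
  simp only [Complex.sq_norm, Complex.normSq_apply, Complex.add_re, Complex.add_im,
    Complex.mul_re, Complex.mul_im, Complex.sub_re, Complex.sub_im, Complex.one_re,
    Complex.one_im, Complex.ofReal_re, Complex.ofReal_im]
  linear_combination -c * hw'

theorem tendsto_norm_one_sub_exp_mul_I_div :
    Tendsto (fun t : ℝ => ‖1 - Complex.exp (t * Complex.I)‖ / t) (𝓝[>] 0) (𝓝 1) := by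
  have hderiv : HasDerivAt (fun t : ℝ => Complex.exp (t * Complex.I)) Complex.I 0 := by
    simpa using (((hasDerivAt_id (0 : ℂ)).mul_const Complex.I).cexp).comp_ofReal
  have hslope := (continuous_norm.tendsto _).comp (hasDerivAt_iff_tendsto_slope.mp hderiv)
  rw [Complex.norm_I] at hslope
  refine (hslope.mono_left (nhdsGT_le_nhdsNE 0)).congr' ?_
  filter_upwards [self_mem_nhdsWithin] with t (ht : 0 < t)
  simp [slope_def_module, abs_of_pos ht, norm_sub_rev, div_eq_inv_mul]

theorem tendsto_mul_sqrt_one_add_mul_sq_sub_one_div {β : Type*} {l : Filter β} {f r : β → ℝ}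
    {K L : ℝ} (hK : 0 ≤ K) (hr : Tendsto r l (𝓝 0)) (hfr : Tendsto (fun x => f x * r x) l (𝓝 L)) :
    Tendsto (fun x => f x * ((√(1 + K * r x ^ 2) - 1) / r x)) l (𝓝 (K * L / 2)) := by
  have hsqrt : Tendsto (fun x => √(1 + K * r x ^ 2) + 1) l (𝓝 2) := by
    have := ((((hr.pow 2).const_mul K).const_add 1).sqrt).add_const 1
    norm_num at this
    exact this
  have hrationalize : ∀ x, (√(1 + K * r x ^ 2) - 1) / r x = K * r x / (√(1 + K * r x ^ 2) + 1) := by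
    intro x
    rcases eq_or_ne (r x) 0 with h | h
    · simp [h]
    have hs : √(1 + K * r x ^ 2) ^ 2 = 1 + K * r x ^ 2 := Real.sq_sqrt (by positivity)
    rw [div_eq_div_iff h (by positivity)]
    linear_combination hs
  simp_rw [hrationalize, ← mul_div_assoc, mul_left_comm (f _)]
  exact (hfr.const_mul K).div hsqrt two_ne_zero

theorem tendsto_pi_div_one_add_atTop : Tendsto (fun α : ℝ => π / (1 + α)) atTop (𝓝[>] 0) := by
  refine tendsto_nhdsWithin_iff.mpr ⟨?_, ?_⟩
  · exact tendsto_const_nhds.div_atTop (tendsto_atTop_add_const_left _ 1 tendsto_id)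
  · filter_upwards [eventually_gt_atTop 0] with α hα
    exact div_pos pi_pos (by linarith)

theorem tendsto_mul_norm_one_sub_exp_pi_div_one_add :
    Tendsto (fun α : ℝ => α * ‖1 - Complex.exp (↑(π / (1 + α)) * Complex.I)‖) atTop (𝓝 π) := by
  have hαθ : Tendsto (fun α : ℝ => α * (π / (1 + α))) atTop (𝓝 π) := by
    have h := ((tendsto_const_nhds (x := (1 : ℝ))).sub
      (tendsto_inv_atTop_zero.comp (tendsto_atTop_add_const_left _ 1 tendsto_id))).const_mul π
    rw [sub_zero, mul_one] at h
    refine h.congr' ?_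
    filter_upwards [eventually_gt_atTop 0] with α hα
    simp only [Function.comp_apply, id]
    field_simp
    ring
  have h := hαθ.mul (tendsto_norm_one_sub_exp_mul_I_div.comp tendsto_pi_div_one_add_atTop)
  rw [mul_one] at h
  refine h.congr' ?_
  filter_upwards [eventually_gt_atTop 0] with α hα
  have : π / (1 + α) ≠ 0 := (div_pos pi_pos (by linarith)).ne'
  simp only [Function.comp_apply]
  field_simp

theorem stmt_16 (b : ℝ) (hb0 : 0 < b) (hb1 : b < 1)
    (D : ℝ → ℝ)
    (hD : ∀ α, D α = (‖(1 + ((b / (1 - b) : ℝ) : ℂ) *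
        (1 - Complex.exp ((π / (1 + α)) * Complex.I)))‖ - 1) /
        ‖(1 - Complex.exp ((π / (1 + α)) * Complex.I))‖) :
    Tendsto (fun α => α * D α) atTop (nhds (b * π / (2 * (1 - b) ^ 2))) := by
  set c := b / (1 - b)
  have hc : 0 ≤ c := div_nonneg hb0.le (by linarith)
  have hDr : ∀ α, D α = (√(1 + c * (1 + c) * ‖1 - Complex.exp (↑(π / (1 + α)) * Complex.I)‖ ^ 2)
      - 1) / ‖1 - Complex.exp (↑(π / (1 + α)) * Complex.I)‖ := by
    intro α
    rw [hD, ← norm_one_add_mul_one_sub_sq (Complex.norm_exp_ofReal_mul_I _),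
      Real.sqrt_sq (norm_nonneg _)]
    push_cast
    rfl
  have hr : Tendsto (fun α : ℝ => ‖1 - Complex.exp (↑(π / (1 + α)) * Complex.I)‖) atTop (𝓝 0) := by
    have hcont : Continuous fun t : ℝ => ‖1 - Complex.exp (t * Complex.I)‖ := by fun_prop
    simpa [Function.comp_def] using
      (hcont.tendsto 0).comp (tendsto_pi_div_one_add_atTop.mono_right nhdsWithin_le_nhds)
  have hlim := tendsto_mul_sqrt_one_add_mul_sq_sub_one_div (K := c * (1 + c)) (by positivity) hr
    tendsto_mul_norm_one_sub_exp_pi_div_one_add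
  simp_rw [hDr]
  convert hlim using 2
  have hb : 1 - b ≠ 0 := by linarith
  simp only [c]
  field_simp
  ring
end

section
/- For b ∈ (0,1) and α ≥ 1, D(α) = (sqrt((1−b)² + 4b sin²(π/(2(1+α)))) − (1−b))/(2(1−b) sin(π/(2(1+α)))) satisfies D(α) ≥ b/((1−b)(1+α)). -/
open Real

/-- Jordan's inequality `sin x ≥ 2x/π` at `x = π/(2A)`. -/
lemma one_le_mul_sin_pi_div_two_mul {A : ℝ} (hA : 1 ≤ A) : 1 ≤ A * sin (π / (2 * A)) := by
  have hA0 : 0 < A := by linarith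
  have hx : π / (2 * A) ≤ π / 2 :=
    div_le_div_of_nonneg_left pi_pos.le (by norm_num) (by linarith)
  have hJordan := mul_le_sin (by positivity) hx
  have hx_eq : 2 / π * (π / (2 * A)) = A⁻¹ := by field_simp
  rw [hx_eq] at hJordan
  calc (1 : ℝ) = A * A⁻¹ := (mul_inv_cancel₀ hA0.ne').symm
    _ ≤ A * sin (π / (2 * A)) := mul_le_mul_of_nonneg_left hJordan hA0.le

lemma one_sub_add_two_mul_div_le_sqrt {b s A : ℝ} (hb : 0 ≤ b) (hA : 0 < A) (hsA : s ≤ A)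
    (hAs : 1 ≤ A * s) :
    (1 - b) + 2 * b * s / A ≤ √((1 - b) ^ 2 + 4 * b * s ^ 2) := by
  have hs : 0 < s := pos_of_mul_pos_right (zero_lt_one.trans_le hAs) hA.le
  -- squaring reduces the claim to `(1 - b) A + b s ≤ A² s`, and `A² s ≥ A ≥ (1 - b) A + b s`
  have hcore : (1 - b) * A + b * s ≤ A ^ 2 * s := by nlinarith
  refine le_trans (le_abs_self _) (abs_le_sqrt ?_)
  have hsq : ((1 - b) + 2 * b * s / A) ^ 2 =
      (1 - b) ^ 2 + 4 * b * s * ((1 - b) * A + b * s) / A ^ 2 := by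
    field_simp; ring
  rw [hsq, add_le_add_iff_left, div_le_iff₀ (by positivity)]
  nlinarith [mul_le_mul_of_nonneg_left hcore (by positivity : 0 ≤ 4 * b * s)]

theorem stmt_17 (b α : ℝ) (hb0 : 0 < b) (hb1 : b < 1) (hα : 1 ≤ α) :
    b / ((1 - b) * (1 + α)) ≤
      (Real.sqrt ((1 - b) ^ 2 + 4 * b * Real.sin (π / (2 * (1 + α))) ^ 2) - (1 - b)) /
        (2 * (1 - b) * Real.sin (π / (2 * (1 + α)))) := by
  set A := 1 + α
  set s := sin (π / (2 * A))
  have hA : 1 ≤ A := by linarith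
  have hAs : 1 ≤ A * s := one_le_mul_sin_pi_div_two_mul hA
  have hsA : s ≤ A := (sin_le_one _).trans hA
  have hs : 0 < s := pos_of_mul_pos_right (zero_lt_one.trans_le hAs) (by linarith)
  have hlhs : b / ((1 - b) * A) = (2 * b * s / A) / (2 * (1 - b) * s) := by
    field_simp
  rw [hlhs]
  refine div_le_div_of_nonneg_right ?_ (by nlinarith)
  exact le_sub_iff_add_le'.mpr (one_sub_add_two_mul_div_le_sqrt hb0.le (by linarith) hsA hAs)
end
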